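/- arXiv:2011.13985 — 2 statements merged into one kernel-verified Lean document; each statement's English description precedes it below -/
import Mathlib

section
/- Let g, f be formal power series over ℚ with g(0) = 1 and f = X·q where q(0) = 1, let M be the Riordan matrix of (g, f), let f̄ = X·q̄ (q̄(0) = 1) be the compositional inverse of f, and let P₃ be the unique matrix with ∑_{j=0}^{n} M_{n,j}·(P₃)_{j,k} = M_{n+3,k} for all n, k. Then the generating function of column 2 of P₃ satisfies X·q̄³·(g∘f̄)·(∑_{n≥0} (P₃)_{n,2}X^n) = (g∘f̄) − q̄². (Equivalently, the Z-sequence of the third production matrix of M has generating function (1/f̄²)·(X²/f̄ − f̄/g(f̄)).) -/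
open PowerSeries Finset

/-- The Riordan matrix of the pair `(g, f)`: entries `M n k = [Xⁿ] (g * fᵏ)`. -/
noncomputable def riordan (g f : PowerSeries ℚ) (n k : ℕ) : ℚ :=
  PowerSeries.coeff (R := ℚ) n (g * f ^ k)

/-- Substitution of the power series `a` (with zero constant term) into `f`,
i.e. the composite `f(a)`. -/
noncomputable def psSubst (a f : PowerSeries ℚ) : PowerSeries ℚ :=
  PowerSeries.mk fun n =>
    PowerSeries.coeff (R := ℚ) n
      (∑ i ∈ Finset.range (n + 1), PowerSeries.C (R := ℚ) (PowerSeries.coeff (R := ℚ) i f) * a ^ i)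

section lemmas
variable {a : PowerSeries ℚ}

lemma my_coeff_pow_eq_zero (ha : constantCoeff a = 0) {i n : ℕ} (h : n < i) :
    coeff n (a ^ i) = 0 := by
  have hX : (X : PowerSeries ℚ) ^ i ∣ a ^ i :=
    pow_dvd_pow_of_dvd (PowerSeries.X_dvd_iff.mpr ha) i
  exact PowerSeries.X_pow_dvd_iff.mp hX n h

lemma coeff_psSubst (F : PowerSeries ℚ) (n : ℕ) :
    coeff n (psSubst a F) = ∑ i ∈ range (n + 1), coeff i F * coeff n (a ^ i) := by
  simp [psSubst, coeff_mk, map_sum, coeff_C_mul]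

lemma coeff_eval₂ (ha : constantCoeff a = 0) (P : Polynomial ℚ) (n : ℕ) :
    coeff n (P.eval₂ C a) = ∑ i ∈ range (n + 1), P.coeff i * coeff n (a ^ i) := by
  rw [Polynomial.eval₂_eq_sum_range, map_sum]
  simp only [coeff_C_mul]
  rcases le_total (P.natDegree + 1) (n + 1) with h | h
  · apply Finset.sum_subset (Finset.range_subset_range.mpr h)
    intro i _ hi
    rw [Polynomial.coeff_eq_zero_of_natDegree_lt (by simpa using hi), zero_mul]
  · symm
    apply Finset.sum_subset (Finset.range_subset_range.mpr h)
    intro i _ hi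
    rw [my_coeff_pow_eq_zero ha (by simpa using hi), mul_zero]

lemma coeff_eval₂_trunc (ha : constantCoeff a = 0) (u : PowerSeries ℚ) {n m : ℕ}
    (hm : m ≤ n) :
    coeff m ((trunc (n + 1) u).eval₂ C a) = coeff m (psSubst a u) := by
  rw [coeff_eval₂ ha, coeff_psSubst]
  apply Finset.sum_congr rfl
  intro i hi
  rw [coeff_trunc]
  rw [Finset.mem_range] at hi
  rw [if_pos (by omega)]

lemma psSubst_mul (ha : constantCoeff a = 0) (u v : PowerSeries ℚ) :
    psSubst a (u * v) = psSubst a u * psSubst a v := by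
  ext n
  have key : coeff n (psSubst a (u * v)) =
      coeff n ((trunc (n + 1) u * trunc (n + 1) v).eval₂ C a) := by
    rw [coeff_psSubst, coeff_eval₂ ha]
    apply Finset.sum_congr rfl
    intro i hi
    rw [Finset.mem_range] at hi
    congr 1
    rw [PowerSeries.coeff_mul, Polynomial.coeff_mul]
    apply Finset.sum_congr rfl
    intro p hp
    rw [Finset.HasAntidiagonal.mem_antidiagonal] at hp
    rw [coeff_trunc, coeff_trunc, if_pos (by omega), if_pos (by omega)]
  rw [key, Polynomial.eval₂_mul, PowerSeries.coeff_mul, PowerSeries.coeff_mul]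
  apply Finset.sum_congr rfl
  intro p hp
  rw [Finset.HasAntidiagonal.mem_antidiagonal] at hp
  rw [coeff_eval₂_trunc ha u (by omega), coeff_eval₂_trunc ha v (by omega)]

lemma psSubst_one : psSubst a (1 : PowerSeries ℚ) = 1 := by
  ext n
  rw [coeff_psSubst]
  rw [Finset.sum_eq_single 0]
  · simp
  · intro i _ hi
    rw [PowerSeries.coeff_one, if_neg hi, zero_mul]
  · simp

lemma psSubst_pow (ha : constantCoeff a = 0) (u : PowerSeries ℚ) (k : ℕ) :
    psSubst a (u ^ k) = psSubst a u ^ k := by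
  induction k with
  | zero => simpa using psSubst_one
  | succ m ih => rw [pow_succ, pow_succ, psSubst_mul ha, ih]

lemma psSubst_X (ha : constantCoeff a = 0) : psSubst a (X : PowerSeries ℚ) = a := by
  ext n
  rw [coeff_psSubst]
  rw [Finset.sum_eq_single 1]
  · simp
  · intro i _ hi
    rw [PowerSeries.coeff_X, if_neg hi, zero_mul]
  · intro h
    have hn : n = 0 := by
      rw [Finset.mem_range] at h; omega
    subst hn
    simp [ha]

lemma psSubst_sub (u v : PowerSeries ℚ) :
    psSubst a (u - v) = psSubst a u - psSubst a v := by
  ext n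
  rw [map_sub, coeff_psSubst, coeff_psSubst, coeff_psSubst, ← Finset.sum_sub_distrib]
  apply Finset.sum_congr rfl
  intro i _
  rw [map_sub, sub_mul]

lemma coeff_mul_psSubst (ha : constantCoeff a = 0) (g F : PowerSeries ℚ) (n : ℕ) :
    coeff n (g * psSubst a F) = ∑ i ∈ range (n + 1), coeff i F * coeff n (g * a ^ i) := by
  rw [PowerSeries.coeff_mul]
  have step1 : ∀ p ∈ antidiagonal n,
      coeff p.1 g * coeff p.2 (psSubst a F) =
      ∑ i ∈ range (n + 1), coeff i F * (coeff p.1 g * coeff p.2 (a ^ i)) := by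
    intro p hp
    rw [Finset.HasAntidiagonal.mem_antidiagonal] at hp
    rw [coeff_psSubst, Finset.mul_sum]
    rw [Finset.sum_subset (Finset.range_subset_range.mpr (by omega : p.2 + 1 ≤ n + 1))]
    · apply Finset.sum_congr rfl; intro i _; ring
    · intro i _ hi
      rw [Finset.mem_range] at hi
      rw [my_coeff_pow_eq_zero ha (by omega), mul_zero, mul_zero]
  rw [Finset.sum_congr rfl step1, Finset.sum_comm]
  apply Finset.sum_congr rfl
  intro i _
  rw [PowerSeries.coeff_mul, Finset.mul_sum]

lemma subst_subst (ha : constantCoeff a = 0) {f : PowerSeries ℚ}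
    (hf : constantCoeff f = 0) (h : psSubst a f = X) (A : PowerSeries ℚ) :
    psSubst a (psSubst f A) = A := by
  ext n
  rw [coeff_psSubst]
  have step1 : ∀ i ∈ range (n + 1),
      coeff i (psSubst f A) * coeff n (a ^ i) =
      ∑ j ∈ range (n + 1), coeff j A * (coeff i (f ^ j) * coeff n (a ^ i)) := by
    intro i hi
    rw [Finset.mem_range] at hi
    rw [coeff_psSubst, Finset.sum_mul]
    rw [Finset.sum_subset (Finset.range_subset_range.mpr (by omega : i + 1 ≤ n + 1))]
    · apply Finset.sum_congr rfl; intro j _; ring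
    · intro j _ hj
      rw [Finset.mem_range] at hj
      rw [my_coeff_pow_eq_zero hf (by omega), mul_zero, zero_mul]
  rw [Finset.sum_congr rfl step1, Finset.sum_comm]
  have step2 : ∀ j ∈ range (n + 1),
      ∑ i ∈ range (n + 1), coeff j A * (coeff i (f ^ j) * coeff n (a ^ i)) =
      coeff j A * (if n = j then 1 else 0) := by
    intro j _
    rw [← Finset.mul_sum]
    congr 1
    rw [← coeff_psSubst, psSubst_pow ha, h, PowerSeries.coeff_X_pow]
  rw [Finset.sum_congr rfl step2, Finset.sum_eq_single n]
  · simp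
  · intro i _ hi
    rw [if_neg (by omega), mul_zero]
  · intro h'
    exact absurd (Finset.self_mem_range_succ n) h'

end lemmas

theorem third_production_matrix_Z_sequence
    (g q qbar : PowerSeries ℚ)
    (hg : constantCoeff (R := ℚ) g = 1) (hq : constantCoeff (R := ℚ) q = 1)
    (hqbar : constantCoeff (R := ℚ) qbar = 1)
    (hcomp : psSubst (X * qbar) (X * q) = X)
    (P3 : ℕ → ℕ → ℚ)
    (hP3 : ∀ n k, ∑ j ∈ range (n + 1), riordan g (X * q) n j * P3 j k
          = riordan g (X * q) (n + 3) k) :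
    X * qbar ^ 3 * psSubst (X * qbar) g * PowerSeries.mk (fun n => P3 n 2)
      = psSubst (X * qbar) g - qbar ^ 2 := by
  set a : PowerSeries ℚ := X * qbar with ha_def
  set f : PowerSeries ℚ := X * q with hf_def
  set A : PowerSeries ℚ := PowerSeries.mk (fun n => P3 n 2) with hA_def
  have ha : constantCoeff a = 0 := by simp [ha_def]
  have hf : constantCoeff f = 0 := by simp [hf_def]
  -- Step A
  have h1 : ∀ n, coeff n (g * psSubst f A) = coeff (n + 3) (g * f ^ 2) := by
    intro n
    rw [coeff_mul_psSubst hf g A n]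
    have : ∑ i ∈ range (n + 1), coeff i A * coeff n (g * f ^ i)
        = ∑ j ∈ range (n + 1), riordan g f n j * P3 j 2 := by
      apply Finset.sum_congr rfl
      intro i _
      rw [hA_def, coeff_mk, riordan, mul_comm]
    rw [this, hP3 n 2, riordan]
  have h2 : g * f ^ 2 = X ^ 2 * (q ^ 2 * g) := by rw [hf_def]; ring
  have hstar : X * (g * psSubst f A) = q ^ 2 * g - 1 := by
    ext m
    cases m with
    | zero =>
      rw [coeff_zero_eq_constantCoeff, map_mul, constantCoeff_X, zero_mul, map_sub,
        map_mul, map_pow, hq, hg, map_one]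
      norm_num
    | succ m =>
      rw [coeff_succ_X_mul, h1 m, h2]
      have : m + 3 = (m + 1) + 2 := by omega
      rw [this, coeff_X_pow_mul]
      rw [map_sub, PowerSeries.coeff_one, if_neg (Nat.succ_ne_zero m), sub_zero]
  -- Step B
  have hB := congrArg (psSubst a) hstar
  rw [psSubst_mul ha, psSubst_mul ha, psSubst_X ha, subst_subst ha hf hcomp A,
    psSubst_sub, psSubst_mul ha, psSubst_pow ha, psSubst_one] at hB
  -- Step C
  have hc := hcomp
  rw [psSubst_mul ha, psSubst_X ha, ha_def] at hc
  have hc2 : X * (qbar * psSubst a q) = X * 1 := by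
    rw [mul_one]; linear_combination hc
  have hqq : qbar * psSubst a q = 1 := mul_left_cancel₀ PowerSeries.X_ne_zero hc2
  linear_combination qbar ^ 2 * hB
    + psSubst a g * (qbar * psSubst a q + 1) * hqq
end

section
/- Let C(X) = ∑_{n≥0} (1/(n+1))·C(2n,n)·X^n be the Catalan number generating function. Then for all natural numbers n and k, the coefficient of X^n in C(X)^{2k+2} satisfies (n+2k+2)·[X^n](C(X)^{2k+2}) = (2k+2)·C(2n+2k+1, n). Consequently the Riordan matrix of (C(rX)², X·C(rX)²) has entries (2(k+1))/(n+k+2)·C(2n+1, n−k)·r^{n−k}. -/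
open PowerSeries Finset

/-- The generating function of the Catalan numbers,
`C(X) = ∑_{n≥0} (1/(n+1))·C(2n,n)·Xⁿ`. -/
noncomputable def catGF : PowerSeries ℚ :=
  PowerSeries.mk fun n => (1 / ((n : ℚ) + 1)) * (Nat.choose (2 * n) n : ℚ)

lemma catGF_eq : catGF = PowerSeries.mk fun n => (catalan n : ℚ) := by
  ext n
  simp only [catGF, coeff_mk]
  have h := succ_mul_catalan_eq_centralBinom n
  have : ((n+1) * catalan n : ℚ) = (Nat.centralBinom n : ℚ) := by exact_mod_cast congrArg (Nat.cast (R := ℚ)) h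
  rw [Nat.centralBinom] at this
  have hn : ((n:ℚ)+1) ≠ 0 := by positivity
  field_simp
  linarith [this]

lemma catGF_eq_one_add : catGF = 1 + X * catGF ^ 2 := by
  rw [catGF_eq]
  ext n
  cases n with
  | zero => simp
  | succ n =>
    rw [map_add, PowerSeries.coeff_one, if_neg (Nat.succ_ne_zero n)]
    have : (X : PowerSeries ℚ) * (PowerSeries.mk fun n => (catalan n : ℚ)) ^ 2
        = X ^ 1 * (PowerSeries.mk fun n => (catalan n : ℚ)) ^ 2 := by ring
    rw [this]
    have h2 : (n + 1) = 1 + n := by omega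
    rw [h2, add_comm 1 n, coeff_X_pow_mul]
    rw [sq, PowerSeries.coeff_mul, coeff_mk]
    rw [catalan_succ']
    push_cast
    simp [coeff_mk]

lemma key : ∀ m n : ℕ, (2 * (n:ℚ) + m) * PowerSeries.coeff (R := ℚ) n (catGF ^ m)
    = (m : ℚ) * (Nat.choose (2 * n + m) n : ℚ) := by
  intro m
  induction m using Nat.twoStepInduction with
  | zero =>
    intro n
    cases n with
    | zero => simp
    | succ n => simp [PowerSeries.coeff_one, Nat.succ_ne_zero]
  | one =>
    intro n
    rw [pow_one, catGF_eq, coeff_mk]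
    have h := Nat.add_one_mul_choose_eq (2*n) n
    have h2 := succ_mul_catalan_eq_centralBinom n
    rw [Nat.centralBinom] at h2
    have ht : (2*n+1) * ((n+1) * catalan n) = Nat.choose (2*n+1) (n+1) * (n+1) := by
      rw [h2]; exact h
    have hq := congrArg (Nat.cast (R := ℚ)) ht
    push_cast at hq
    have hs : Nat.choose (2*n+1) (n+1) = Nat.choose (2*n+1) n := by
      have := Nat.choose_symm (show n+1 ≤ 2*n+1 by omega)
      have he : 2*n+1-(n+1) = n := by omega
      rw [he] at this
      exact this.symm
    rw [hs] at hq
    have hn : ((n:ℚ)+1) ≠ 0 := by positivity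
    push_cast
    have h3 : ((2*(n:ℚ)+1) * (catalan n:ℚ)) * ((n:ℚ)+1)
        = ((Nat.choose (2*n+1) n : ℚ)) * ((n:ℚ)+1) := by nlinarith [hq]
    have h4 := mul_right_cancel₀ hn h3
    linarith [h4]
  | more m ih1 ih2 =>
    intro n
    -- coeff n (C^(m+2)) = coeff (n+1) (C^(m+1)) - coeff (n+1) (C^m)
    have hrec : PowerSeries.coeff (R := ℚ) n (catGF ^ (m+2))
        = PowerSeries.coeff (R := ℚ) (n+1) (catGF ^ (m+1)) - PowerSeries.coeff (R := ℚ) (n+1) (catGF ^ m) := by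
      have hC : catGF - 1 = X * catGF ^ 2 := sub_eq_of_eq_add' catGF_eq_one_add
      have hx : catGF ^ (m+1) - catGF ^ m = X ^ 1 * catGF ^ (m+2) := by
        calc catGF ^ (m+1) - catGF ^ m = catGF ^ m * (catGF - 1) := by ring
        _ = catGF ^ m * (X * catGF^2) := by rw [hC]
        _ = X ^ 1 * catGF ^ (m+2) := by ring
      have hcc := congrArg (PowerSeries.coeff (R := ℚ) (n+1)) hx
      rw [map_sub, coeff_X_pow_mul] at hcc
      linarith [hcc]
    have h1 := ih2 (n+1)  -- (m+1)
    have h0 := ih1 (n+1)  -- m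
    -- binomial identities, N = 2n+m+2
    have hb1 : (Nat.choose (2*n+m+3) (n+1) : ℚ) * ((n:ℚ)+1) = (Nat.choose (2*n+m+2) n : ℚ) * ((2*(n:ℚ)+m)+3) := by
      have := Nat.add_one_mul_choose_eq (2*n+m+2) n
      have h := congrArg (Nat.cast (R := ℚ)) this
      push_cast at h
      push_cast
      linarith [h]
    have hb2 : (Nat.choose (2*n+m+2) (n+1) : ℚ) * ((n:ℚ)+1) = (Nat.choose (2*n+m+2) n : ℚ) * ((n:ℚ)+m+2) := by
      have := Nat.choose_succ_right_eq (2*n+m+2) n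
      have hsub : 2*n+m+2 - n = n+m+2 := by omega
      rw [hsub] at this
      have h := congrArg (Nat.cast (R := ℚ)) this
      push_cast at h
      push_cast
      linarith [h]
    rw [hrec]
    push_cast at h1 h0 ⊢
    have e1 : (2 * ((n:ℚ)+1) + (m+1)) = 2*(n:ℚ)+m+3 := by ring
    have e2 : (2 * ((n:ℚ)+1) + m) = 2*(n:ℚ)+m+2 := by ring
    have e3 : 2*(n+1)+(m+1) = 2*n+m+3 := by omega
    have e4 : 2*(n+1)+m = 2*n+m+2 := by omega
    rw [e3] at h1
    rw [e4] at h0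
    have hN3 : (2*(n:ℚ)+m+3) ≠ 0 := by positivity
    have hN2 : (2*(n:ℚ)+m+2) ≠ 0 := by positivity
    have ha1 : PowerSeries.coeff (R := ℚ) (n+1) (catGF ^ (m+1)) = (m+1) * (Nat.choose (2*n+m+3) (n+1) : ℚ) / (2*(n:ℚ)+m+3) := by
      field_simp
      linarith [h1]
    have ha0 : PowerSeries.coeff (R := ℚ) (n+1) (catGF ^ m) = m * (Nat.choose (2*n+m+2) (n+1) : ℚ) / (2*(n:ℚ)+m+2) := by
      field_simp
      linarith [h0]
    rw [ha1, ha0]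
    have hc3 : (Nat.choose (2*n+m+3) (n+1) : ℚ) = (Nat.choose (2*n+m+2) n : ℚ) * ((2*(n:ℚ)+m)+3) / ((n:ℚ)+1) := by
      have hn : ((n:ℚ)+1) ≠ 0 := by positivity
      field_simp
      linarith [hb1]
    have hc2 : (Nat.choose (2*n+m+2) (n+1) : ℚ) = (Nat.choose (2*n+m+2) n : ℚ) * ((n:ℚ)+m+2) / ((n:ℚ)+1) := by
      have hn : ((n:ℚ)+1) ≠ 0 := by positivity
      field_simp
      linarith [hb2]
    rw [hc3, hc2]
    field_simp
    ring

theorem catalan_power_coeff_and_entries :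
    (∀ n k : ℕ,
      ((n : ℚ) + 2 * k + 2) * PowerSeries.coeff (R := ℚ) n (catGF ^ (2 * k + 2))
        = (2 * (k : ℚ) + 2) * (Nat.choose (2 * n + 2 * k + 1) n : ℚ))
    ∧ ∀ (r : ℚ) (n k : ℕ), k ≤ n →
        riordan ((rescale r catGF) ^ 2) (X * (rescale r catGF) ^ 2) n k
          = (2 * ((k : ℚ) + 1)) / ((n : ℚ) + k + 2)
              * (Nat.choose (2 * n + 1) (n - k) : ℚ) * r ^ (n - k) := by
  have part1 : ∀ n k : ℕ,
      ((n : ℚ) + 2 * k + 2) * PowerSeries.coeff (R := ℚ) n (catGF ^ (2 * k + 2))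
        = (2 * (k : ℚ) + 2) * (Nat.choose (2 * n + 2 * k + 1) n : ℚ) := by
    intro n k
    have h := key (2*k+2) n
    have hratio : (Nat.choose (2*n+2*k+2) n : ℚ) * ((n:ℚ)+2*k+2) = (Nat.choose (2*n+2*k+1) n : ℚ) * (2*(n:ℚ)+2*k+2) := by
      have := Nat.choose_mul_succ_eq (2*n+2*k+1) n
      have hsub : 2*n+2*k+1+1-n = n+2*k+2 := by omega
      rw [hsub] at this
      have hq := congrArg (Nat.cast (R := ℚ)) this
      push_cast at hq
      push_cast
      linarith [hq]
    have e : 2*n+(2*k+2) = 2*n+2*k+2 := by omega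
    rw [e] at h
    push_cast at h
    have hN : (2*(n:ℚ)+2*k+2) ≠ 0 := by positivity
    have hcoeff : PowerSeries.coeff (R := ℚ) n (catGF ^ (2*k+2)) = (2*(k:ℚ)+2) * (Nat.choose (2*n+2*k+2) n : ℚ) / (2*(n:ℚ)+2*k+2) := by
      field_simp
      linarith [h]
    rw [hcoeff]
    field_simp
    nlinarith [hratio]
  refine ⟨part1, ?_⟩
  intro r n k hk
  have hre : (rescale r catGF) ^ 2 * (X * (rescale r catGF) ^ 2) ^ k
      = X ^ k * rescale r (catGF ^ (2*k+2)) := by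
    rw [map_pow]
    ring
  have : riordan ((rescale r catGF) ^ 2) (X * (rescale r catGF) ^ 2) n k
      = PowerSeries.coeff (R := ℚ) n (X ^ k * rescale r (catGF ^ (2*k+2))) := by
    rw [riordan, hre]
  rw [this]
  have hn : n = (n - k) + k := by omega
  rw [hn, coeff_X_pow_mul, coeff_rescale]
  have h := part1 (n-k) k
  have hc : ((n-k : ℕ) : ℚ) = (n:ℚ) - k := by
    push_cast [hk]; ring
  rw [hc] at h
  have e : 2*(n-k)+2*k+1 = 2*n+1 := by omega
  rw [e] at h
  have hden : ((n:ℚ) + k + 2) ≠ 0 := by positivity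
  have hd2 : ((n:ℚ) - k + 2*k + 2) = (n:ℚ)+k+2 := by ring
  rw [hd2] at h
  have : PowerSeries.coeff (R := ℚ) (n-k) (catGF ^ (2*k+2)) = (2*(k:ℚ)+2) * (Nat.choose (2*n+1) (n-k) : ℚ) / ((n:ℚ)+k+2) := by
    field_simp
    linarith [h]
  rw [this]
  rw [← hn]
  field_simp
end
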